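/- arXiv:2402.15076 — 3 statements merged into one kernel-verified Lean document; each statement's English description precedes it below -/
import Mathlib

section
/- Let D be the six-vertex graph on {v, w, t, h, b₁, b₂} with edges (v,t), (t,b₁), (t,b₂), (h,b₁), (h,b₂), (w,h) and thresholds τ(t) = τ(b₁) = τ(b₂) = 1, τ(h) = 2, and τ(v), τ(w) ≥ 1 arbitrary. Then the tail v activates all internal vertices, i.e., {t, h, b₁, b₂} ⊆ 𝒜({v}), whereas the head w activates none of them and does not activate v, i.e., 𝒜({w}) ∩ {t, h, b₁, b₂, v} = ∅. -/
namespace TSS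

variable {V : Type*}

/-- The set of active vertices after `i` steps of the activation process started from `S`. -/
def activeAt (G : SimpleGraph V) (τ : V → ℕ) (S : Set V) : ℕ → Set V
  | 0 => S
  | i + 1 => activeAt G τ S i ∪ { v | τ v ≤ (G.neighborSet v ∩ activeAt G τ S i).ncard }

/-- The active vertex set `𝒜(S) = ⋃ i, 𝒜ⁱ(S)`. -/
def activeSet (G : SimpleGraph V) (τ : V → ℕ) (S : Set V) : Set V :=
  ⋃ i, activeAt G τ S i

/-- `S` is a target set for `(G, τ)` if it activates every vertex. -/
def IsTargetSet (G : SimpleGraph V) (τ : V → ℕ) (S : Set V) : Prop :=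
  activeSet G τ S = Set.univ

/-- Minimum size of a target set. -/
noncomputable def optTS (G : SimpleGraph V) (τ : V → ℕ) : ℕ :=
  sInf { m | ∃ S : Set V, IsTargetSet G τ S ∧ S.ncard = m }

/-- A reconfiguration sequence `Sfam 0 = X, …, Sfam T = Y` of target sets where
consecutive sets differ in exactly one vertex. -/
structure IsReconfSeq (G : SimpleGraph V) (τ : V → ℕ) (X Y : Set V) (T : ℕ)
    (Sfam : ℕ → Set V) : Prop where
  head : Sfam 0 = X
  last : Sfam T = Y
  target : ∀ t ≤ T, IsTargetSet G τ (Sfam t)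
  step : ∀ t < T, (symmDiff (Sfam t) (Sfam (t + 1))).ncard = 1

/-- The size of a reconfiguration sequence: maximum cardinality of any member. -/
noncomputable def seqSize (T : ℕ) (Sfam : ℕ → Set V) : ℕ :=
  (Finset.range (T + 1)).sup fun t => (Sfam t).ncard

/-- `opt_G(X ⇝ Y)`: minimum size over all reconfiguration sequences from `X` to `Y`. -/
noncomputable def optReconf (G : SimpleGraph V) (τ : V → ℕ) (X Y : Set V) : ℕ :=
  sInf { m | ∃ T Sfam, IsReconfSeq G τ X Y T Sfam ∧ seqSize T Sfam = m }

/-- The four internal vertices of a one-way gadget. -/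
inductive GadVert where | t | h | b1 | b2

/-- Index set of the one-way gadgets of the graph `H` built from `G` (with degree
function `d`) and `ℓ`. -/
inductive GadIdx (V : Type*) (ℓ : ℕ) (d : V → ℕ) where
  | vx (v : V) (i : Fin ℓ)
  | xa (i : Fin ℓ) (v : V) (j : Fin (d v))
  | av (v : V) (j : Fin (d v))
  | vy (v : V) (i : Fin ℓ)
  | yb (i : Fin ℓ) (v : V) (j : Fin (d v))
  | bv (v : V) (j : Fin (d v))

/-- Vertices of the graph `H`: a copy of `V`, the sets `X`, `Y`, `A`, `B`, and the
internal vertices of all one-way gadgets. -/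
inductive HVert (V : Type*) (ℓ : ℕ) (d : V → ℕ) where
  | orig (v : V)
  | xx (i : Fin ℓ)
  | yy (i : Fin ℓ)
  | aa (v : V) (j : Fin (d v))
  | bb (v : V) (j : Fin (d v))
  | gad (D : GadIdx V ℓ d) (w : GadVert)

variable {ℓ : ℕ} {d : V → ℕ}

/-- The tail of a one-way gadget. -/
def gadTail : GadIdx V ℓ d → HVert V ℓ d
  | .vx v _ => .orig v
  | .xa i _ _ => .xx i
  | .av v j => .aa v j
  | .vy v _ => .orig v
  | .yb i _ _ => .yy i
  | .bv v j => .bb v j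

/-- The head of a one-way gadget. -/
def gadHead : GadIdx V ℓ d → HVert V ℓ d
  | .vx _ i => .xx i
  | .xa _ v j => .aa v j
  | .av v _ => .orig v
  | .vy _ i => .yy i
  | .yb _ v j => .bb v j
  | .bv v _ => .orig v

/-- Base edge relation of the graph `H`. -/
def HRel (G : SimpleGraph V) (ℓ : ℕ) (d : V → ℕ) : HVert V ℓ d → HVert V ℓ d → Prop :=
  fun p q =>
    (∃ u v, G.Adj u v ∧ p = .orig u ∧ q = .orig v) ∨
    (∃ D, p = .gad D .t ∧ (q = .gad D .b1 ∨ q = .gad D .b2)) ∨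
    (∃ D, p = .gad D .h ∧ (q = .gad D .b1 ∨ q = .gad D .b2)) ∨
    (∃ D, p = gadTail D ∧ q = .gad D .t) ∨
    (∃ D, p = gadHead D ∧ q = .gad D .h)

/-- The graph `H` constructed from `G` (with degree function `d`) and `ℓ`. -/
def graphH (G : SimpleGraph V) (ℓ : ℕ) (d : V → ℕ) : SimpleGraph (HVert V ℓ d) :=
  SimpleGraph.fromRel (HRel G ℓ d)

/-- The threshold function `τ'` of `H`, where `n` is the number of vertices of `G`. -/
def tauH (τ : V → ℕ) (n ℓ : ℕ) (d : V → ℕ) : HVert V ℓ d → ℕ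
  | .orig v => τ v
  | .xx _ => n
  | .yy _ => n
  | .aa _ _ => ℓ
  | .bb _ _ => ℓ
  | .gad _ .t => 1
  | .gad _ .b1 => 1
  | .gad _ .b2 => 1
  | .gad _ .h => 2

/-- The vertex set `X = {x₁, …, x_ℓ}` of `H`. -/
def XSet (V : Type*) (ℓ : ℕ) (d : V → ℕ) : Set (HVert V ℓ d) := Set.range HVert.xx

/-- The vertex set `Y = {y₁, …, y_ℓ}` of `H`. -/
def YSet (V : Type*) (ℓ : ℕ) (d : V → ℕ) : Set (HVert V ℓ d) := Set.range HVert.yy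

/-- The copy of `V` inside `V(H)`. -/
def OrigSet (V : Type*) (ℓ : ℕ) (d : V → ℕ) : Set (HVert V ℓ d) := Set.range HVert.orig

/-- The vertex set `A = {a_{v,j}}` of `H`. -/
def ASet (V : Type*) (ℓ : ℕ) (d : V → ℕ) : Set (HVert V ℓ d) :=
  { p | ∃ v j, p = HVert.aa v j }

/-- The vertex set `B = {b_{v,j}}` of `H`. -/
def BSet (V : Type*) (ℓ : ℕ) (d : V → ℕ) : Set (HVert V ℓ d) :=
  { p | ∃ v j, p = HVert.bb v j }

end TSS

namespace TSS

/-- Base edge relation of the six-vertex one-way-gadget graph on vertices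
`v = 0`, `w = 1`, `t = 2`, `h = 3`, `b₁ = 4`, `b₂ = 5`, with edges
`(v,t), (t,b₁), (t,b₂), (h,b₁), (h,b₂), (w,h)`. -/
def gadgetRel : Fin 6 → Fin 6 → Prop := fun p q =>
  (p = 0 ∧ q = 2) ∨ (p = 2 ∧ q = 4) ∨ (p = 2 ∧ q = 5) ∨
    (p = 3 ∧ q = 4) ∨ (p = 3 ∧ q = 5) ∨ (p = 1 ∧ q = 3)

end TSS

open TSS in
/-- In the one-way gadget, the tail `v` activates all internal vertices `t, h, b₁, b₂`,
whereas the head `w` activates none of them and does not activate `v`. -/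
theorem stmt4 (τ : Fin 6 → ℕ)
    (ht : τ 2 = 1) (hh : τ 3 = 2) (hb1 : τ 4 = 1) (hb2 : τ 5 = 1)
    (hv : 1 ≤ τ 0) (hw : 1 ≤ τ 1) :
    ({2, 3, 4, 5} : Set (Fin 6)) ⊆ activeSet (SimpleGraph.fromRel gadgetRel) τ {0} ∧
      activeSet (SimpleGraph.fromRel gadgetRel) τ {1} ∩ ({2, 3, 4, 5, 0} : Set (Fin 6)) = ∅ := by
  set G := SimpleGraph.fromRel gadgetRel with hG
  set G := SimpleGraph.fromRel gadgetRel with hG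
  have adj : ∀ p q : Fin 6, G.Adj p q ↔
      ((p,q) = (0,2) ∨ (p,q) = (2,0) ∨ (p,q) = (2,4) ∨ (p,q) = (4,2) ∨
       (p,q) = (2,5) ∨ (p,q) = (5,2) ∨ (p,q) = (3,4) ∨ (p,q) = (4,3) ∨
       (p,q) = (3,5) ∨ (p,q) = (5,3) ∨ (p,q) = (1,3) ∨ (p,q) = (3,1)) := by
    intro p q
    rw [hG, SimpleGraph.fromRel_adj]
    revert p q; unfold gadgetRel; decide
  constructor
  · -- tail activates everything
    have h2 : (2 : Fin 6) ∈ activeAt G τ {0} 1 := by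
      refine Or.inr ?_
      have hN : G.neighborSet 2 ∩ activeAt G τ {0} 0 = {0} := by
        ext x
        simp only [SimpleGraph.mem_neighborSet, adj, Set.mem_inter_iff, activeAt,
          Set.mem_singleton_iff]
        revert x; decide
      show τ 2 ≤ _
      rw [hN, Set.ncard_singleton, ht]
    have h4 : (4 : Fin 6) ∈ activeAt G τ {0} 2 := by
      refine Or.inr ?_
      have hsub : ({2} : Set (Fin 6)) ⊆ G.neighborSet 4 ∩ activeAt G τ {0} 1 := by
        rintro x rfl; exact ⟨(adj 4 2).mpr (by decide), h2⟩
      have hle := Set.ncard_le_ncard hsub (Set.toFinite _)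
      rw [Set.ncard_singleton] at hle
      show τ 4 ≤ _
      rw [hb1]; exact hle
    have h5 : (5 : Fin 6) ∈ activeAt G τ {0} 2 := by
      refine Or.inr ?_
      have hsub : ({2} : Set (Fin 6)) ⊆ G.neighborSet 5 ∩ activeAt G τ {0} 1 := by
        rintro x rfl; exact ⟨(adj 5 2).mpr (by decide), h2⟩
      have hle := Set.ncard_le_ncard hsub (Set.toFinite _)
      rw [Set.ncard_singleton] at hle
      show τ 5 ≤ _
      rw [hb2]; exact hle
    have h3 : (3 : Fin 6) ∈ activeAt G τ {0} 3 := by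
      refine Or.inr ?_
      have hsub : ({4, 5} : Set (Fin 6)) ⊆ G.neighborSet 3 ∩ activeAt G τ {0} 2 := by
        intro x hx
        rcases hx with rfl | rfl
        · exact ⟨(adj 3 4).mpr (by decide), h4⟩
        · exact ⟨(adj 3 5).mpr (by decide), h5⟩
      have hle := Set.ncard_le_ncard hsub (Set.toFinite _)
      rw [Set.ncard_pair (by decide : (4 : Fin 6) ≠ 5)] at hle
      show τ 3 ≤ _
      rw [hh]; exact hle
    intro x hx
    rcases hx with rfl | rfl | rfl | rfl
    · exact Set.mem_iUnion.mpr ⟨1, h2⟩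
    · exact Set.mem_iUnion.mpr ⟨3, h3⟩
    · exact Set.mem_iUnion.mpr ⟨2, h4⟩
    · exact Set.mem_iUnion.mpr ⟨2, h5⟩
  · -- head activates nothing
    have hempty : ∀ w : Fin 6, w = 0 ∨ w = 2 ∨ w = 4 ∨ w = 5 →
        G.neighborSet w ∩ ({1} : Set (Fin 6)) = ∅ := by
      intro w hw
      rcases hw with rfl | rfl | rfl | rfl <;>
        · ext x
          simp only [SimpleGraph.mem_neighborSet, adj, Set.mem_inter_iff,
            Set.mem_singleton_iff, Set.mem_empty_iff_false, iff_false, not_and]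
          revert x; decide
    have h3N : G.neighborSet 3 ∩ ({1} : Set (Fin 6)) = {1} := by
      ext x
      simp only [SimpleGraph.mem_neighborSet, adj, Set.mem_inter_iff,
        Set.mem_singleton_iff]
      revert x; decide
    have stable : ∀ i, activeAt G τ {1} i = {1} := by
      intro i
      induction i with
      | zero => rfl
      | succ n ih =>
        show activeAt G τ {1} n ∪ _ = {1}
        rw [ih]
        refine Set.union_eq_self_of_subset_right ?_
        intro v hv
        simp only [Set.mem_setOf_eq] at hv
        have hc : v = 0 ∨ v = 1 ∨ v = 2 ∨ v = 3 ∨ v = 4 ∨ v = 5 := by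
          clear hv; revert v; decide
        rcases hc with rfl | rfl | rfl | rfl | rfl | rfl
        · rw [hempty 0 (by decide), Set.ncard_empty] at hv; exact absurd hv (by omega)
        · rfl
        · rw [hempty 2 (by decide), Set.ncard_empty] at hv
          rw [ht] at hv; exact absurd hv (by omega)
        · rw [h3N, Set.ncard_singleton, hh] at hv; exact absurd hv (by omega)
        · rw [hempty 4 (by decide), Set.ncard_empty, hb1] at hv
          exact absurd hv (by omega)
        · rw [hempty 5 (by decide), Set.ncard_empty, hb2] at hv
          exact absurd hv (by omega)
    have hAS : activeSet G τ {1} = {1} := by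
      unfold activeSet
      ext x
      simp only [Set.mem_iUnion, stable]
      exact ⟨fun ⟨_, h⟩ => h, fun h => ⟨0, h⟩⟩
    rw [hAS]
    ext x
    simp only [Set.mem_inter_iff, Set.mem_singleton_iff, Set.mem_insert_iff,
      Set.mem_empty_iff_false, iff_false, not_and]
    rintro rfl
    decide
end

section
/- In the graph H constructed from G and ℓ, each of the following vertex sets is a target set for H: the set X = {x₁, …, x_ℓ}, the set Y = {y₁, …, y_ℓ}, and any target set for G (viewed as a subset of the copy of V inside V(H)). -/
namespace TSS

variable {V : Type*}

lemma activeAt_mono (G : SimpleGraph V) (τ : V → ℕ) (S : Set V) :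
    Monotone (activeAt G τ S) :=
  monotone_nat_of_le_succ fun _ => Set.subset_union_left

lemma subset_activeSet (G : SimpleGraph V) (τ : V → ℕ) (S : Set V) :
    S ⊆ activeSet G τ S :=
  Set.subset_iUnion (activeAt G τ S) 0

lemma mem_activeSet_of_card [Finite V] {G : SimpleGraph V} {τ : V → ℕ} {S : Set V} {p : V}
    (T : Set V) (hT : T ⊆ G.neighborSet p ∩ activeSet G τ S) (hcard : τ p ≤ T.ncard) :
    p ∈ activeSet G τ S := by
  classical
  have hstage : ∀ q ∈ T, ∃ i, q ∈ activeAt G τ S i := by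
    intro q hq
    simpa [activeSet, Set.mem_iUnion] using (hT hq).2
  choose f hf using hstage
  have hTfin : T.Finite := Set.toFinite T
  set g : V → ℕ := fun q => if h : q ∈ T then f q h else 0 with hg
  obtain ⟨N, hN⟩ : ∃ N, T ⊆ activeAt G τ S N := by
    refine ⟨hTfin.toFinset.sup g, fun q hq => activeAt_mono G τ S ?_ (hf q hq)⟩
    have h1 : f q hq = g q := by simp [hg, hq]
    rw [h1]
    exact Finset.le_sup (by simpa using hq)
  have hsub : T ⊆ G.neighborSet p ∩ activeAt G τ S N := fun q hq => ⟨(hT hq).1, hN hq⟩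
  have hle : τ p ≤ (G.neighborSet p ∩ activeAt G τ S N).ncard :=
    le_trans hcard (Set.ncard_le_ncard hsub (Set.toFinite _))
  have : p ∈ activeAt G τ S (N + 1) := by
    rw [activeAt]; exact Set.mem_union_right _ hle
  exact Set.mem_iUnion.2 ⟨N + 1, this⟩

instance : Finite GadVert :=
  Finite.of_surjective (fun p : Bool × Bool => match p with
    | (false, false) => GadVert.t
    | (false, true) => GadVert.h
    | (true, false) => GadVert.b1
    | (true, true) => GadVert.b2) (by
      intro w
      cases w
      exacts [⟨(false, false), rfl⟩, ⟨(false, true), rfl⟩,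
        ⟨(true, false), rfl⟩, ⟨(true, true), rfl⟩])

variable {ℓ : ℕ} {d : V → ℕ}

/-- Auxiliary surjection used to prove finiteness of `GadIdx`. -/
def gadIdxOf : ((V × Fin ℓ) ⊕ (Fin ℓ × Σ v : V, Fin (d v)) ⊕ (Σ v : V, Fin (d v)) ⊕
    (V × Fin ℓ) ⊕ (Fin ℓ × Σ v : V, Fin (d v)) ⊕ (Σ v : V, Fin (d v))) → GadIdx V ℓ d
  | .inl (v, i) => .vx v i
  | .inr (.inl (i, ⟨v, j⟩)) => .xa i v j
  | .inr (.inr (.inl ⟨v, j⟩)) => .av v j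
  | .inr (.inr (.inr (.inl (v, i)))) => .vy v i
  | .inr (.inr (.inr (.inr (.inl (i, ⟨v, j⟩))))) => .yb i v j
  | .inr (.inr (.inr (.inr (.inr ⟨v, j⟩)))) => .bv v j

instance [Finite V] : Finite (GadIdx V ℓ d) :=
  Finite.of_surjective gadIdxOf (by
    intro D
    cases D with
    | vx v i => exact ⟨.inl (v, i), rfl⟩
    | xa i v j => exact ⟨.inr (.inl (i, ⟨v, j⟩)), rfl⟩
    | av v j => exact ⟨.inr (.inr (.inl ⟨v, j⟩)), rfl⟩
    | vy v i => exact ⟨.inr (.inr (.inr (.inl (v, i)))), rfl⟩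
    | yb i v j => exact ⟨.inr (.inr (.inr (.inr (.inl (i, ⟨v, j⟩))))), rfl⟩
    | bv v j => exact ⟨.inr (.inr (.inr (.inr (.inr ⟨v, j⟩)))), rfl⟩)

/-- Auxiliary surjection used to prove finiteness of `HVert`. -/
def hVertOf : (V ⊕ Fin ℓ ⊕ Fin ℓ ⊕ (Σ v : V, Fin (d v)) ⊕ (Σ v : V, Fin (d v)) ⊕
    (GadIdx V ℓ d × GadVert)) → HVert V ℓ d
  | .inl v => .orig v
  | .inr (.inl i) => .xx i
  | .inr (.inr (.inl i)) => .yy i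
  | .inr (.inr (.inr (.inl ⟨v, j⟩))) => .aa v j
  | .inr (.inr (.inr (.inr (.inl ⟨v, j⟩)))) => .bb v j
  | .inr (.inr (.inr (.inr (.inr (D, w))))) => .gad D w

instance [Finite V] : Finite (HVert V ℓ d) :=
  Finite.of_surjective hVertOf (by
    intro p
    cases p with
    | orig v => exact ⟨.inl v, rfl⟩
    | xx i => exact ⟨.inr (.inl i), rfl⟩
    | yy i => exact ⟨.inr (.inr (.inl i)), rfl⟩
    | aa v j => exact ⟨.inr (.inr (.inr (.inl ⟨v, j⟩))), rfl⟩
    | bb v j => exact ⟨.inr (.inr (.inr (.inr (.inl ⟨v, j⟩)))), rfl⟩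
    | gad D w => exact ⟨.inr (.inr (.inr (.inr (.inr (D, w))))), rfl⟩)

lemma tail_ne_gad (D : GadIdx V ℓ d) (w : GadVert) : gadTail D ≠ HVert.gad D w := by
  cases D <;> simp [gadTail]

lemma head_ne_gad (D : GadIdx V ℓ d) (w : GadVert) : gadHead D ≠ HVert.gad D w := by
  cases D <;> simp [gadHead]

lemma adj_t_tail (G : SimpleGraph V) (D : GadIdx V ℓ d) :
    (graphH G ℓ d).Adj (HVert.gad D GadVert.t) (gadTail D) := by
  rw [graphH, SimpleGraph.fromRel_adj]
  exact ⟨(tail_ne_gad D GadVert.t).symm,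
    Or.inr (Or.inr (Or.inr (Or.inr (Or.inl ⟨D, rfl, rfl⟩))))⟩

lemma adj_b1_t (G : SimpleGraph V) (D : GadIdx V ℓ d) :
    (graphH G ℓ d).Adj (HVert.gad D GadVert.b1) (HVert.gad D GadVert.t) := by
  rw [graphH, SimpleGraph.fromRel_adj]
  exact ⟨by simp, Or.inr (Or.inr (Or.inl ⟨D, rfl, Or.inl rfl⟩))⟩

lemma adj_b2_t (G : SimpleGraph V) (D : GadIdx V ℓ d) :
    (graphH G ℓ d).Adj (HVert.gad D GadVert.b2) (HVert.gad D GadVert.t) := by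
  rw [graphH, SimpleGraph.fromRel_adj]
  exact ⟨by simp, Or.inr (Or.inr (Or.inl ⟨D, rfl, Or.inr rfl⟩))⟩

lemma adj_h_b1 (G : SimpleGraph V) (D : GadIdx V ℓ d) :
    (graphH G ℓ d).Adj (HVert.gad D GadVert.h) (HVert.gad D GadVert.b1) := by
  rw [graphH, SimpleGraph.fromRel_adj]
  exact ⟨by simp, Or.inl (Or.inr (Or.inr (Or.inl ⟨D, rfl, Or.inl rfl⟩)))⟩

lemma adj_h_b2 (G : SimpleGraph V) (D : GadIdx V ℓ d) :
    (graphH G ℓ d).Adj (HVert.gad D GadVert.h) (HVert.gad D GadVert.b2) := by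
  rw [graphH, SimpleGraph.fromRel_adj]
  exact ⟨by simp, Or.inl (Or.inr (Or.inr (Or.inl ⟨D, rfl, Or.inr rfl⟩)))⟩

lemma adj_head_h (G : SimpleGraph V) (D : GadIdx V ℓ d) :
    (graphH G ℓ d).Adj (gadHead D) (HVert.gad D GadVert.h) := by
  rw [graphH, SimpleGraph.fromRel_adj]
  exact ⟨head_ne_gad D GadVert.h,
    Or.inl (Or.inr (Or.inr (Or.inr (Or.inr ⟨D, rfl, rfl⟩))))⟩

lemma adj_orig (G : SimpleGraph V) {u v : V} (h : G.Adj u v) :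
    (graphH G ℓ d).Adj (HVert.orig u) (HVert.orig v) := by
  rw [graphH, SimpleGraph.fromRel_adj]
  exact ⟨by simp [h.ne], Or.inl (Or.inl ⟨u, v, h, rfl, rfl⟩)⟩

variable [Finite V] (G : SimpleGraph V) (τ : V → ℕ) (n : ℕ) (S : Set (HVert V ℓ d))

lemma gad_active (D : GadIdx V ℓ d)
    (hD : gadTail D ∈ activeSet (graphH G ℓ d) (tauH τ n ℓ d) S) (w : GadVert) :
    HVert.gad D w ∈ activeSet (graphH G ℓ d) (tauH τ n ℓ d) S := by
  have ht : HVert.gad D GadVert.t ∈ activeSet (graphH G ℓ d) (tauH τ n ℓ d) S := by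
    apply mem_activeSet_of_card {gadTail D}
    · rintro q rfl
      exact ⟨adj_t_tail G D, hD⟩
    · simp [tauH]
  have hb1 : HVert.gad D GadVert.b1 ∈ activeSet (graphH G ℓ d) (tauH τ n ℓ d) S := by
    apply mem_activeSet_of_card {HVert.gad D GadVert.t}
    · rintro q rfl
      exact ⟨adj_b1_t G D, ht⟩
    · simp [tauH]
  have hb2 : HVert.gad D GadVert.b2 ∈ activeSet (graphH G ℓ d) (tauH τ n ℓ d) S := by
    apply mem_activeSet_of_card {HVert.gad D GadVert.t}
    · rintro q rfl
      exact ⟨adj_b2_t G D, ht⟩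
    · simp [tauH]
  have hh : HVert.gad D GadVert.h ∈ activeSet (graphH G ℓ d) (tauH τ n ℓ d) S := by
    apply mem_activeSet_of_card {HVert.gad D GadVert.b1, HVert.gad D GadVert.b2}
    · rintro q (rfl | rfl)
      · exact ⟨adj_h_b1 G D, hb1⟩
      · exact ⟨adj_h_b2 G D, hb2⟩
    · rw [Set.ncard_pair (by simp)]
      simp [tauH]
  cases w
  exacts [ht, hh, hb1, hb2]

lemma active_via_heads {p : HVert V ℓ d} (T0 : Set (GadIdx V ℓ d))
    (hhead : ∀ D ∈ T0, gadHead D = p)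
    (htail : ∀ D ∈ T0, gadTail D ∈ activeSet (graphH G ℓ d) (tauH τ n ℓ d) S)
    (hcard : tauH τ n ℓ d p ≤ T0.ncard) :
    p ∈ activeSet (graphH G ℓ d) (tauH τ n ℓ d) S := by
  apply mem_activeSet_of_card ((fun D => HVert.gad D GadVert.h) '' T0)
  · rintro q ⟨D, hDT, rfl⟩
    refine ⟨?_, gad_active G τ n S D (htail D hDT) GadVert.h⟩
    have := adj_head_h (d := d) G D
    rwa [hhead D hDT] at this
  · rwa [Set.ncard_image_of_injective _ (fun a b h => by simpa using h)]

lemma ncard_range_inj {α β : Type*} [Finite α] (f : α → β) (hf : Function.Injective f) :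
    (Set.range f).ncard = Nat.card α := by
  rw [← Set.image_univ, Set.ncard_image_of_injective _ hf, Set.ncard_univ]

lemma orig_prop [Fintype V] (G : SimpleGraph V) (τ : V → ℕ) {ℓ : ℕ} {d : V → ℕ} (S0 : Set V) :
    ∀ i, ∀ v ∈ activeAt G τ S0 i,
      HVert.orig v ∈ activeSet (graphH G ℓ d) (tauH τ (Fintype.card V) ℓ d)
        (HVert.orig '' S0) := by
  intro i
  induction i with
  | zero => exact fun v hv => subset_activeSet _ _ _ ⟨v, hv, rfl⟩
  | succ i ih =>
    intro v hv
    rw [activeAt] at hv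
    rcases hv with hv | hv
    · exact ih v hv
    · apply mem_activeSet_of_card (HVert.orig '' (G.neighborSet v ∩ activeAt G τ S0 i))
      · rintro q ⟨u, ⟨hadj, hact⟩, rfl⟩
        exact ⟨adj_orig G hadj, ih u hact⟩
      · rw [Set.ncard_image_of_injective _ (fun a b h => by simpa using h)]
        exact hv

lemma target_of_orig [Fintype V] (G : SimpleGraph V) (τ : V → ℕ) {ℓ : ℕ} {d : V → ℕ}
    (S : Set (HVert V ℓ d))
    (horig : ∀ v, HVert.orig v ∈ activeSet (graphH G ℓ d) (tauH τ (Fintype.card V) ℓ d) S) :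
    IsTargetSet (graphH G ℓ d) (tauH τ (Fintype.card V) ℓ d) S := by
  have hx : ∀ i : Fin ℓ,
      HVert.xx i ∈ activeSet (graphH G ℓ d) (tauH τ (Fintype.card V) ℓ d) S := by
    intro i
    apply active_via_heads G τ (Fintype.card V) S (Set.range fun v => GadIdx.vx v i)
    · rintro D ⟨v, rfl⟩; rfl
    · rintro D ⟨v, rfl⟩; exact horig v
    · rw [ncard_range_inj _ (fun a b h => by simpa using h)]
      simp [tauH, Nat.card_eq_fintype_card]
  have hy : ∀ i : Fin ℓ,
      HVert.yy i ∈ activeSet (graphH G ℓ d) (tauH τ (Fintype.card V) ℓ d) S := by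
    intro i
    apply active_via_heads G τ (Fintype.card V) S (Set.range fun v => GadIdx.vy v i)
    · rintro D ⟨v, rfl⟩; rfl
    · rintro D ⟨v, rfl⟩; exact horig v
    · rw [ncard_range_inj _ (fun a b h => by simpa using h)]
      simp [tauH, Nat.card_eq_fintype_card]
  have ha : ∀ (v : V) (j : Fin (d v)),
      HVert.aa v j ∈ activeSet (graphH G ℓ d) (tauH τ (Fintype.card V) ℓ d) S := by
    intro v j
    apply active_via_heads G τ (Fintype.card V) S (Set.range fun i : Fin ℓ => GadIdx.xa i v j)
    · rintro D ⟨i, rfl⟩; rfl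
    · rintro D ⟨i, rfl⟩; exact hx i
    · rw [ncard_range_inj _ (fun a b h => by simpa using h)]
      simp [tauH, Nat.card_eq_fintype_card]
  have hb : ∀ (v : V) (j : Fin (d v)),
      HVert.bb v j ∈ activeSet (graphH G ℓ d) (tauH τ (Fintype.card V) ℓ d) S := by
    intro v j
    apply active_via_heads G τ (Fintype.card V) S (Set.range fun i : Fin ℓ => GadIdx.yb i v j)
    · rintro D ⟨i, rfl⟩; rfl
    · rintro D ⟨i, rfl⟩; exact hy i
    · rw [ncard_range_inj _ (fun a b h => by simpa using h)]
      simp [tauH, Nat.card_eq_fintype_card]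
  rw [IsTargetSet, Set.eq_univ_iff_forall]
  intro p
  cases p with
  | orig v => exact horig v
  | xx i => exact hx i
  | yy i => exact hy i
  | aa v j => exact ha v j
  | bb v j => exact hb v j
  | gad D w =>
    apply gad_active G τ (Fintype.card V) S D ?_ w
    cases D with
    | vx v i => exact horig v
    | xa i v j => exact hx i
    | av v j => exact ha v j
    | vy v i => exact horig v
    | yb i v j => exact hy i
    | bv v j => exact hb v j

end TSS

open TSS in
/-- In the graph `H` constructed from `G` and `ℓ`, each of `X`, `Y`, and (the copy of) any
target set for `G` is a target set for `H`. -/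
theorem stmt5 {V : Type*} [Fintype V] (G : SimpleGraph V) [DecidableRel G.Adj] (τ : V → ℕ)
    (ℓ : ℕ) (hℓ : 1 ≤ ℓ) (hiso : ∀ v : V, 0 < G.degree v) (hτ : ∀ v : V, τ v ≤ G.degree v) :
    IsTargetSet (graphH G ℓ (fun v => G.degree v)) (tauH τ (Fintype.card V) ℓ (fun v => G.degree v))
        (XSet V ℓ (fun v => G.degree v)) ∧
      IsTargetSet (graphH G ℓ (fun v => G.degree v)) (tauH τ (Fintype.card V) ℓ (fun v => G.degree v))
        (YSet V ℓ (fun v => G.degree v)) ∧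
      ∀ S : Set V, IsTargetSet G τ S →
        IsTargetSet (graphH G ℓ (fun v => G.degree v)) (tauH τ (Fintype.card V) ℓ (fun v => G.degree v))
          (HVert.orig '' S) := by
  classical
  have horigX : ∀ v : V, HVert.orig v ∈
      activeSet (graphH G ℓ (fun v => G.degree v)) (tauH τ (Fintype.card V) ℓ (fun v => G.degree v))
        (XSet V ℓ (fun v => G.degree v)) := by
    intro v
    have hx0 : ∀ i : Fin ℓ, HVert.xx i ∈
        activeSet (graphH G ℓ (fun v => G.degree v))
          (tauH τ (Fintype.card V) ℓ (fun v => G.degree v)) (XSet V ℓ (fun v => G.degree v)) :=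
      fun i => subset_activeSet _ _ _ ⟨i, rfl⟩
    have ha : ∀ j : Fin (G.degree v), HVert.aa v j ∈
        activeSet (graphH G ℓ (fun v => G.degree v))
          (tauH τ (Fintype.card V) ℓ (fun v => G.degree v)) (XSet V ℓ (fun v => G.degree v)) := by
      intro j
      apply active_via_heads G τ (Fintype.card V) _ (Set.range fun i : Fin ℓ => GadIdx.xa i v j)
      · rintro D ⟨i, rfl⟩; rfl
      · rintro D ⟨i, rfl⟩; exact hx0 i
      · rw [ncard_range_inj _ (fun a b h => by simpa using h)]
        simp [tauH, Nat.card_eq_fintype_card]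
    apply active_via_heads G τ (Fintype.card V) _
      (Set.range fun j : Fin (G.degree v) => GadIdx.av v j)
    · rintro D ⟨j, rfl⟩; rfl
    · rintro D ⟨j, rfl⟩; exact ha j
    · rw [ncard_range_inj _ (fun a b h => by simpa using h)]
      simpa [tauH, Nat.card_eq_fintype_card] using hτ v
  have horigY : ∀ v : V, HVert.orig v ∈
      activeSet (graphH G ℓ (fun v => G.degree v)) (tauH τ (Fintype.card V) ℓ (fun v => G.degree v))
        (YSet V ℓ (fun v => G.degree v)) := by
    intro v
    have hy0 : ∀ i : Fin ℓ, HVert.yy i ∈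
        activeSet (graphH G ℓ (fun v => G.degree v))
          (tauH τ (Fintype.card V) ℓ (fun v => G.degree v)) (YSet V ℓ (fun v => G.degree v)) :=
      fun i => subset_activeSet _ _ _ ⟨i, rfl⟩
    have hb : ∀ j : Fin (G.degree v), HVert.bb v j ∈
        activeSet (graphH G ℓ (fun v => G.degree v))
          (tauH τ (Fintype.card V) ℓ (fun v => G.degree v)) (YSet V ℓ (fun v => G.degree v)) := by
      intro j
      apply active_via_heads G τ (Fintype.card V) _ (Set.range fun i : Fin ℓ => GadIdx.yb i v j)
      · rintro D ⟨i, rfl⟩; rfl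
      · rintro D ⟨i, rfl⟩; exact hy0 i
      · rw [ncard_range_inj _ (fun a b h => by simpa using h)]
        simp [tauH, Nat.card_eq_fintype_card]
    apply active_via_heads G τ (Fintype.card V) _
      (Set.range fun j : Fin (G.degree v) => GadIdx.bv v j)
    · rintro D ⟨j, rfl⟩; rfl
    · rintro D ⟨j, rfl⟩; exact hb j
    · rw [ncard_range_inj _ (fun a b h => by simpa using h)]
      simpa [tauH, Nat.card_eq_fintype_card] using hτ v
  refine ⟨target_of_orig G τ _ horigX, target_of_orig G τ _ horigY, ?_⟩
  intro S hS
  apply target_of_orig G τ _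
  intro v
  have hv : v ∈ activeSet G τ S := by rw [hS]; trivial
  obtain ⟨i, hi⟩ := Set.mem_iUnion.1 hv
  exact orig_prop G τ S i v hi
end

section
/- Let H be the graph constructed from G and ℓ, with target sets X and Y of size ℓ, and let k_s ∈ ℕ with ℓ ≥ k_s + 1. If opt(G) > k_s, then opt_H(X ⇝ Y) > k_s + ℓ. -/
/-!
Every vertex of `H` hangs off a vertex of `V ∪ X ∪ Y`, its `anchor`: a gadget vertex hangs off the
anchor of its tail, and `a_{v,j}`, `b_{v,j}` off `v`. Let `S` be a target set of `H` whose anchors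
miss some `x_{i₀}` and some `y_{i₁}`, and let `T` be the set activated in `G` by the anchors of `S`
in `V`. If `T ≠ V`, then `S` avoids the set of vertices anchored in `V ∖ T`, at `x_{i₀}` or at
`y_{i₁}`, and every vertex of this set has fewer neighbours outside it than its threshold, so it is
never activated. Hence the anchors of a target set of `H` contain `X`, or `Y`, or a target set
of `G`.

Along a reconfiguration sequence from `X` whose sets have at most `k_s + ℓ` vertices, the anchors
therefore contain `X` throughout: when a vertex is removed, the smaller target set cannot anchor
`Y` or a target set of `G` (of size `> k_s`) instead, as together with `X` this would need more
than `k_s + ℓ` anchors. This contradicts reaching `Y`.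
-/

namespace TSS

lemma ncard_lt_of_subset_image {α β : Type*} [Finite β] {A : Set α} {f : β → α} {s : Set β}
    {n : ℕ} (h : A ⊆ f '' s) (hs : s.ncard < n) : A.ncard < n :=
  ((Set.ncard_le_ncard h ((Set.toFinite s).image f)).trans Set.ncard_image_le).trans_lt hs

section Activation

variable {W : Type*} {Γ : SimpleGraph W} {θ : W → ℕ} {S : Set W}

lemma activeAt_mono_s7 : Monotone (activeAt Γ θ S) :=
  monotone_nat_of_le_succ fun _ => Set.subset_union_left

lemma subset_activeSet_s7 : S ⊆ activeSet Γ θ S :=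
  Set.subset_iUnion (activeAt Γ θ S) 0

variable [Finite W]

lemma mem_activeSet_of_le_ncard {w : W}
    (hw : θ w ≤ (Γ.neighborSet w ∩ activeSet Γ θ S).ncard) : w ∈ activeSet Γ θ S := by
  have hfin := (Γ.neighborSet w ∩ activeSet Γ θ S).toFinite
  obtain ⟨i, hi⟩ := activeAt_mono_s7.directed_le.exists_mem_subset_of_finset_subset_biUnion
    (hfin.coe_toFinset.trans_subset Set.inter_subset_right)
  refine Set.mem_iUnion.2 ⟨i + 1, Or.inr (hw.trans (Set.ncard_le_ncard ?_))⟩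
  exact fun u hu => ⟨hu.1, hi (hfin.mem_toFinset.2 hu)⟩

lemma mem_activeSet_of_subset {w : W} {s : Set W} (hs : s ⊆ Γ.neighborSet w ∩ activeSet Γ θ S)
    (hθ : θ w ≤ s.ncard) : w ∈ activeSet Γ θ S :=
  mem_activeSet_of_le_ncard (hθ.trans (Set.ncard_le_ncard hs))

lemma disjoint_activeSet_of_ncard_lt {U : Set W} (hSU : Disjoint S U)
    (hU : ∀ w ∈ U, (Γ.neighborSet w \ U).ncard < θ w) : Disjoint (activeSet Γ θ S) U := by
  suffices ∀ i, Disjoint (activeAt Γ θ S i) U from Set.disjoint_iUnion_left.2 this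
  intro i
  induction i with
  | zero => exact hSU
  | succ i ih =>
    refine Disjoint.union_left ih (Set.disjoint_left.2 fun w hw hwU => ?_)
    refine (hU w hwU).not_ge (hw.trans (Set.ncard_le_ncard fun u hu => ⟨hu.1, ?_⟩))
    exact Set.disjoint_left.1 ih hu.2

end Activation

section Reconfiguration

variable {W : Type*} {Γ : SimpleGraph W} {θ : W → ℕ}

def ReconfStep (Γ : SimpleGraph W) (θ : W → ℕ) (A B : Set W) : Prop :=
  IsTargetSet Γ θ A ∧ IsTargetSet Γ θ B ∧ (symmDiff A B).ncard = 1

instance : Std.Symm (ReconfStep Γ θ) where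
  symm _ _ h := ⟨h.2.1, h.1, by rw [symmDiff_comm]; exact h.2.2⟩

lemma exists_isReconfSeq_of_reflTransGen {X Y : Set W} (hX : IsTargetSet Γ θ X)
    (h : Relation.ReflTransGen (ReconfStep Γ θ) X Y) : ∃ T Sfam, IsReconfSeq Γ θ X Y T Sfam := by
  induction h with
  | refl => exact ⟨0, fun _ => X, rfl, rfl, fun _ _ => hX, fun _ h => absurd h (Nat.not_lt_zero _)⟩
  | @tail _ C _ hstep ih =>
    obtain ⟨T, Sfam, hseq⟩ := ih
    refine ⟨T + 1, fun t => if t ≤ T then Sfam t else C, ?_, ?_, fun t ht => ?_, fun t ht => ?_⟩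
    · simpa using hseq.head
    · simp
    · split_ifs with htT
      · exact hseq.target t htT
      · exact hstep.2.1
    · obtain htT | rfl := Nat.lt_or_eq_of_le (Nat.lt_succ_iff.1 ht)
      · simpa [htT.le, Nat.succ_le_of_lt htT] using hseq.step t htT
      · simpa [hseq.last] using hstep.2.2

lemma reflTransGen_union_of_forall_superset {X : Set W}
    (hX : ∀ S, X ⊆ S → IsTargetSet Γ θ S) {Z : Set W} (hZ : Z.Finite) :
    Relation.ReflTransGen (ReconfStep Γ θ) X (X ∪ Z) := by
  induction Z, hZ using Set.Finite.induction_on with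
  | empty => rw [Set.union_empty]
  | @insert a Z _ _ ih =>
    rw [Set.union_insert]
    by_cases ha : a ∈ X ∪ Z
    · rwa [Set.insert_eq_of_mem ha]
    refine ih.tail ⟨hX _ Set.subset_union_left, hX _ ?_, ?_⟩
    · exact Set.subset_union_left.trans (Set.subset_insert a _)
    · rw [symmDiff_of_le (Set.subset_insert a _), Set.insert_sdiff_of_notMem _ ha, sdiff_self,
        Set.bot_eq_empty, insert_empty_eq, Set.ncard_singleton]

lemma exists_isReconfSeq_of_forall_superset [Finite W] {X Y : Set W}
    (hX : ∀ S, X ⊆ S → IsTargetSet Γ θ S) (hY : ∀ S, Y ⊆ S → IsTargetSet Γ θ S) :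
    ∃ T Sfam, IsReconfSeq Γ θ X Y T Sfam := by
  refine exists_isReconfSeq_of_reflTransGen (hX X subset_rfl) ?_
  have hXY := reflTransGen_union_of_forall_superset hX Y.toFinite
  have hYX := reflTransGen_union_of_forall_superset hY X.toFinite
  rw [Set.union_comm] at hYX
  exact hXY.trans (Std.Symm.symm _ _ hYX)

lemma subset_or_subset_of_ncard_symmDiff_eq_one {α : Type*} {A B : Set α}
    (h : (symmDiff A B).ncard = 1) : A ⊆ B ∨ B ⊆ A := by
  obtain ⟨a, ha⟩ := Set.ncard_eq_one.1 h
  have hmem (b : α) : b ∈ symmDiff A B ↔ b = a := by rw [ha, Set.mem_singleton_iff]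
  rcases (hmem a).2 rfl with ⟨haA, -⟩ | ⟨haB, -⟩
  · refine .inr fun b hbB => of_not_not fun hbA => ?_
    exact hbA ((hmem b).1 (.inr ⟨hbB, hbA⟩) ▸ haA)
  · refine .inl fun b hbA => of_not_not fun hbB => ?_
    exact hbB ((hmem b).1 (.inl ⟨hbA, hbB⟩) ▸ haB)

end Reconfiguration

section GraphH

variable {V : Type*} {ℓ : ℕ} {d : V → ℕ}

instance inst_s7 : Finite GadVert :=
  Finite.of_surjective ![.t, .h, .b1, .b2] fun g => by
    cases g
    exacts [⟨0, rfl⟩, ⟨1, rfl⟩, ⟨2, rfl⟩, ⟨3, rfl⟩]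

instance inst_s7_2 [Finite V] : Finite (GadIdx V ℓ d) :=
  Finite.of_surjective
    (fun x : (V × Fin ℓ) ⊕ (Fin ℓ × Σ v, Fin (d v)) ⊕ (Σ v, Fin (d v)) ⊕
        (V × Fin ℓ) ⊕ (Fin ℓ × Σ v, Fin (d v)) ⊕ (Σ v, Fin (d v)) =>
      match x with
      | .inl (v, i) => .vx v i
      | .inr (.inl (i, ⟨v, j⟩)) => .xa i v j
      | .inr (.inr (.inl ⟨v, j⟩)) => .av v j
      | .inr (.inr (.inr (.inl (v, i)))) => .vy v i
      | .inr (.inr (.inr (.inr (.inl (i, ⟨v, j⟩))))) => .yb i v j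
      | .inr (.inr (.inr (.inr (.inr ⟨v, j⟩)))) => .bv v j)
    fun D => by
      rcases D with ⟨v, i⟩ | ⟨i, v, j⟩ | ⟨v, j⟩ | ⟨v, i⟩ | ⟨i, v, j⟩ | ⟨v, j⟩
      exacts [⟨.inl (v, i), rfl⟩, ⟨.inr (.inl (i, ⟨v, j⟩)), rfl⟩,
        ⟨.inr (.inr (.inl ⟨v, j⟩)), rfl⟩, ⟨.inr (.inr (.inr (.inl (v, i)))), rfl⟩,
        ⟨.inr (.inr (.inr (.inr (.inl (i, ⟨v, j⟩))))), rfl⟩,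
        ⟨.inr (.inr (.inr (.inr (.inr ⟨v, j⟩)))), rfl⟩]

instance inst_s7_3 [Finite V] : Finite (HVert V ℓ d) :=
  Finite.of_surjective
    (fun x : V ⊕ Fin ℓ ⊕ Fin ℓ ⊕ (Σ v, Fin (d v)) ⊕ (Σ v, Fin (d v)) ⊕
        (GadIdx V ℓ d × GadVert) =>
      match x with
      | .inl v => .orig v
      | .inr (.inl i) => .xx i
      | .inr (.inr (.inl i)) => .yy i
      | .inr (.inr (.inr (.inl ⟨v, j⟩))) => .aa v j
      | .inr (.inr (.inr (.inr (.inl ⟨v, j⟩)))) => .bb v j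
      | .inr (.inr (.inr (.inr (.inr (D, g))))) => .gad D g)
    fun p => by
      rcases p with v | i | i | ⟨v, j⟩ | ⟨v, j⟩ | ⟨D, g⟩
      exacts [⟨.inl v, rfl⟩, ⟨.inr (.inl i), rfl⟩, ⟨.inr (.inr (.inl i)), rfl⟩,
        ⟨.inr (.inr (.inr (.inl ⟨v, j⟩))), rfl⟩, ⟨.inr (.inr (.inr (.inr (.inl ⟨v, j⟩)))), rfl⟩,
        ⟨.inr (.inr (.inr (.inr (.inr (D, g))))), rfl⟩]

def anchor : HVert V ℓ d → HVert V ℓ d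
  | .aa v _ | .bb v _ => .orig v
  | .gad (.vx v _) _ | .gad (.av v _) _ | .gad (.vy v _) _ | .gad (.bv v _) _ => .orig v
  | .gad (.xa i _ _) _ => .xx i
  | .gad (.yb i _ _) _ => .yy i
  | p => p

lemma anchor_gad (D : GadIdx V ℓ d) (g : GadVert) : anchor (.gad D g) = anchor (gadTail D) := by
  cases D <;> rfl

lemma ncard_XSet : (XSet V ℓ d).ncard = ℓ := by
  rw [XSet, Set.ncard_range_of_injective fun _ _ h => HVert.xx.inj h, Nat.card_eq_fintype_card,
    Fintype.card_fin]

lemma ncard_YSet : (YSet V ℓ d).ncard = ℓ := by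
  rw [YSet, Set.ncard_range_of_injective fun _ _ h => HVert.yy.inj h, Nat.card_eq_fintype_card,
    Fintype.card_fin]

lemma disjoint_XSet_YSet : Disjoint (XSet V ℓ d) (YSet V ℓ d) :=
  Set.disjoint_left.2 fun _ ⟨_, hx⟩ ⟨_, hy⟩ => by subst hx; cases hy

lemma disjoint_XSet_image_orig (s : Set V) : Disjoint (XSet V ℓ d) (HVert.orig '' s) :=
  Set.disjoint_left.2 fun _ ⟨_, hx⟩ ⟨_, _, hy⟩ => by subst hx; cases hy

lemma add_ncard_le_of_XSet_subset [Finite V] {P Z : Set (HVert V ℓ d)}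
    (hX : XSet V ℓ d ⊆ P) (hZ : Z ⊆ P) (hdisj : Disjoint (XSet V ℓ d) Z) :
    ℓ + Z.ncard ≤ P.ncard := by
  calc ℓ + Z.ncard = (XSet V ℓ d ∪ Z).ncard := by rw [Set.ncard_union_eq hdisj, ncard_XSet]
    _ ≤ P.ncard := Set.ncard_le_ncard (Set.union_subset hX hZ)

variable {G : SimpleGraph V}

lemma graphH_adj_gadTail (D : GadIdx V ℓ d) : (graphH G ℓ d).Adj (gadTail D) (.gad D .t) := by
  refine (SimpleGraph.fromRel_adj _ _ _).2 ⟨?_, .inl (.inr (.inr (.inr (.inl ⟨D, rfl, rfl⟩))))⟩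
  cases D <;> simp [gadTail]

lemma graphH_adj_gadHead (D : GadIdx V ℓ d) : (graphH G ℓ d).Adj (gadHead D) (.gad D .h) := by
  refine (SimpleGraph.fromRel_adj _ _ _).2 ⟨?_, .inl (.inr (.inr (.inr (.inr ⟨D, rfl, rfl⟩))))⟩
  cases D <;> simp [gadHead]

lemma graphH_adj_t_b1 (D : GadIdx V ℓ d) : (graphH G ℓ d).Adj (.gad D .t) (.gad D .b1) :=
  (SimpleGraph.fromRel_adj _ _ _).2 ⟨by simp, .inl (.inr (.inl ⟨D, rfl, .inl rfl⟩))⟩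

lemma graphH_adj_t_b2 (D : GadIdx V ℓ d) : (graphH G ℓ d).Adj (.gad D .t) (.gad D .b2) :=
  (SimpleGraph.fromRel_adj _ _ _).2 ⟨by simp, .inl (.inr (.inl ⟨D, rfl, .inr rfl⟩))⟩

lemma graphH_adj_h_b1 (D : GadIdx V ℓ d) : (graphH G ℓ d).Adj (.gad D .h) (.gad D .b1) :=
  (SimpleGraph.fromRel_adj _ _ _).2 ⟨by simp, .inl (.inr (.inr (.inl ⟨D, rfl, .inl rfl⟩)))⟩

lemma graphH_adj_h_b2 (D : GadIdx V ℓ d) : (graphH G ℓ d).Adj (.gad D .h) (.gad D .b2) :=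
  (SimpleGraph.fromRel_adj _ _ _).2 ⟨by simp, .inl (.inr (.inr (.inl ⟨D, rfl, .inr rfl⟩)))⟩

lemma graphH_adj_gad {D : GadIdx V ℓ d} {g : GadVert} {u : HVert V ℓ d}
    (h : (graphH G ℓ d).Adj (.gad D g) u) :
    (g = .t ∧ u = gadTail D) ∨ (g = .h ∧ u = gadHead D) ∨ ∃ g', u = .gad D g' := by
  obtain ⟨-, h | h⟩ := (SimpleGraph.fromRel_adj _ _ _).1 h <;>
    rcases h with ⟨a, b, -, hp, hq⟩ | ⟨E, hp, hq⟩ | ⟨E, hp, hq⟩ | ⟨E, hp, hq⟩ | ⟨E, hp, hq⟩ <;>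
    (try cases E) <;> aesop (add simp [gadTail, gadHead])

lemma graphH_adj_orig {v : V} {u : HVert V ℓ d} (h : (graphH G ℓ d).Adj (.orig v) u) :
    (∃ w, G.Adj v w ∧ u = .orig w) ∨ (∃ i, u = .gad (.vx v i) .t) ∨
      (∃ i, u = .gad (.vy v i) .t) ∨ (∃ j, u = .gad (.av v j) .h) ∨
      (∃ j, u = .gad (.bv v j) .h) := by
  obtain ⟨-, h | h⟩ := (SimpleGraph.fromRel_adj _ _ _).1 h <;>
    rcases h with ⟨a, b, hab, hp, hq⟩ | ⟨E, hp, hq⟩ | ⟨E, hp, hq⟩ | ⟨E, hp, hq⟩ | ⟨E, hp, hq⟩ <;>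
    (try cases E) <;> aesop (add simp [gadTail, gadHead], safe apply SimpleGraph.Adj.symm)

lemma graphH_adj_xx {i : Fin ℓ} {u : HVert V ℓ d} (h : (graphH G ℓ d).Adj (.xx i) u) :
    (∃ v, u = .gad (.vx v i) .h) ∨ ∃ v j, u = .gad (.xa i v j) .t := by
  obtain ⟨-, h | h⟩ := (SimpleGraph.fromRel_adj _ _ _).1 h <;>
    rcases h with ⟨a, b, -, hp, hq⟩ | ⟨E, hp, hq⟩ | ⟨E, hp, hq⟩ | ⟨E, hp, hq⟩ | ⟨E, hp, hq⟩ <;>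
    (try cases E) <;> aesop (add simp [gadTail, gadHead])

lemma graphH_adj_yy {i : Fin ℓ} {u : HVert V ℓ d} (h : (graphH G ℓ d).Adj (.yy i) u) :
    (∃ v, u = .gad (.vy v i) .h) ∨ ∃ v j, u = .gad (.yb i v j) .t := by
  obtain ⟨-, h | h⟩ := (SimpleGraph.fromRel_adj _ _ _).1 h <;>
    rcases h with ⟨a, b, -, hp, hq⟩ | ⟨E, hp, hq⟩ | ⟨E, hp, hq⟩ | ⟨E, hp, hq⟩ | ⟨E, hp, hq⟩ <;>
    (try cases E) <;> aesop (add simp [gadTail, gadHead])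

lemma graphH_adj_aa {v : V} {j : Fin (d v)} {u : HVert V ℓ d} (h : (graphH G ℓ d).Adj (.aa v j) u) :
    (∃ i, u = .gad (.xa i v j) .h) ∨ u = .gad (.av v j) .t := by
  obtain ⟨-, h | h⟩ := (SimpleGraph.fromRel_adj _ _ _).1 h <;>
    rcases h with ⟨a, b, -, hp, hq⟩ | ⟨E, hp, hq⟩ | ⟨E, hp, hq⟩ | ⟨E, hp, hq⟩ | ⟨E, hp, hq⟩ <;>
    (try cases E) <;> aesop (add simp [gadTail, gadHead])

lemma graphH_adj_bb {v : V} {j : Fin (d v)} {u : HVert V ℓ d} (h : (graphH G ℓ d).Adj (.bb v j) u) :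
    (∃ i, u = .gad (.yb i v j) .h) ∨ u = .gad (.bv v j) .t := by
  obtain ⟨-, h | h⟩ := (SimpleGraph.fromRel_adj _ _ _).1 h <;>
    rcases h with ⟨a, b, -, hp, hq⟩ | ⟨E, hp, hq⟩ | ⟨E, hp, hq⟩ | ⟨E, hp, hq⟩ | ⟨E, hp, hq⟩ <;>
    (try cases E) <;> aesop (add simp [gadTail, gadHead])

end GraphH

section Thresholds

variable {V : Type*} [Fintype V] {ℓ : ℕ} {d : V → ℕ} {G : SimpleGraph V} {τ : V → ℕ}
  {S : Set (HVert V ℓ d)}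

local notation "H" => graphH G ℓ d
local notation "θH" => tauH τ (Fintype.card V) ℓ d

lemma gad_mem_activeSet_of_gadTail_mem {D : GadIdx V ℓ d}
    (hD : gadTail D ∈ activeSet H θH S) (g : GadVert) : HVert.gad D g ∈ activeSet H θH S := by
  have ht : HVert.gad D .t ∈ activeSet H θH S :=
    mem_activeSet_of_subset (Set.singleton_subset_iff.2 ⟨(graphH_adj_gadTail D).symm, hD⟩)
      (by simp [tauH])
  have hb₁ : HVert.gad D .b1 ∈ activeSet H θH S :=
    mem_activeSet_of_subset (Set.singleton_subset_iff.2 ⟨(graphH_adj_t_b1 D).symm, ht⟩)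
      (by simp [tauH])
  have hb₂ : HVert.gad D .b2 ∈ activeSet H θH S :=
    mem_activeSet_of_subset (Set.singleton_subset_iff.2 ⟨(graphH_adj_t_b2 D).symm, ht⟩)
      (by simp [tauH])
  have hh : HVert.gad D .h ∈ activeSet H θH S :=
    mem_activeSet_of_subset
      (Set.insert_subset_iff.2 ⟨⟨graphH_adj_h_b1 D, hb₁⟩,
        Set.singleton_subset_iff.2 ⟨graphH_adj_h_b2 D, hb₂⟩⟩)
      (by rw [Set.ncard_pair (by simp)]; rfl)
  cases g <;> assumption

lemma mem_activeSet_of_gadTail_mem {w : HVert V ℓ d} {κ : Type*} (D : κ → GadIdx V ℓ d)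
    (hD : Function.Injective D) (hhead : ∀ k, gadHead (D k) = w)
    (htail : ∀ k, gadTail (D k) ∈ activeSet H θH S) (hθ : θH w ≤ Nat.card κ) :
    w ∈ activeSet H θH S := by
  refine mem_activeSet_of_subset (s := Set.range fun k => HVert.gad (D k) .h)
    (Set.range_subset_iff.2 fun k => ⟨?_, gad_mem_activeSet_of_gadTail_mem (htail k) _⟩) ?_
  · exact hhead k ▸ graphH_adj_gadHead (D k)
  · rwa [Set.ncard_range_of_injective fun a b h => hD (HVert.gad.inj h).1]

lemma isTargetSet_of_forall_orig_mem (horig : ∀ v, HVert.orig v ∈ activeSet H θH S) :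
    IsTargetSet H θH S := by
  have hx (i : Fin ℓ) : HVert.xx i ∈ activeSet H θH S :=
    mem_activeSet_of_gadTail_mem (fun v => .vx v i) (fun _ _ h => (GadIdx.vx.inj h).1)
      (fun _ => rfl) horig (by simp [tauH, Nat.card_eq_fintype_card])
  have hy (i : Fin ℓ) : HVert.yy i ∈ activeSet H θH S :=
    mem_activeSet_of_gadTail_mem (fun v => .vy v i) (fun _ _ h => (GadIdx.vy.inj h).1)
      (fun _ => rfl) horig (by simp [tauH, Nat.card_eq_fintype_card])
  have ha (v : V) (j : Fin (d v)) : HVert.aa v j ∈ activeSet H θH S :=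
    mem_activeSet_of_gadTail_mem (fun i => .xa i v j) (fun _ _ h => (GadIdx.xa.inj h).1)
      (fun _ => rfl) hx (by simp [tauH])
  have hb (v : V) (j : Fin (d v)) : HVert.bb v j ∈ activeSet H θH S :=
    mem_activeSet_of_gadTail_mem (fun i => .yb i v j) (fun _ _ h => (GadIdx.yb.inj h).1)
      (fun _ => rfl) hy (by simp [tauH])
  have htail (D : GadIdx V ℓ d) : gadTail D ∈ activeSet H θH S := by
    cases D
    exacts [horig _, hx _, ha _ _, horig _, hy _, hb _ _]
  refine Set.eq_univ_of_forall fun p => ?_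
  cases p
  exacts [horig _, hx _, hy _, ha _ _, hb _ _,
    gad_mem_activeSet_of_gadTail_mem (htail _) _]

lemma isTargetSet_of_XSet_subset (hτd : ∀ v, τ v ≤ d v) (hX : XSet V ℓ d ⊆ S) :
    IsTargetSet H θH S := by
  have ha (v : V) (j : Fin (d v)) : HVert.aa v j ∈ activeSet H θH S :=
    mem_activeSet_of_gadTail_mem (fun i => .xa i v j) (fun _ _ h => (GadIdx.xa.inj h).1)
      (fun _ => rfl) (fun i => subset_activeSet_s7 (hX ⟨i, rfl⟩)) (by simp [tauH])
  refine isTargetSet_of_forall_orig_mem fun v => ?_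
  exact mem_activeSet_of_gadTail_mem (fun j => .av v j) (fun _ _ h => eq_of_heq (GadIdx.av.inj h).2)
    (fun _ => rfl) (ha v) (by simpa [tauH] using hτd v)

lemma isTargetSet_of_YSet_subset (hτd : ∀ v, τ v ≤ d v) (hY : YSet V ℓ d ⊆ S) :
    IsTargetSet H θH S := by
  have hb (v : V) (j : Fin (d v)) : HVert.bb v j ∈ activeSet H θH S :=
    mem_activeSet_of_gadTail_mem (fun i => .yb i v j) (fun _ _ h => (GadIdx.yb.inj h).1)
      (fun _ => rfl) (fun i => subset_activeSet_s7 (hY ⟨i, rfl⟩)) (by simp [tauH])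
  refine isTargetSet_of_forall_orig_mem fun v => ?_
  exact mem_activeSet_of_gadTail_mem (fun j => .bv v j) (fun _ _ h => eq_of_heq (GadIdx.bv.inj h).2)
    (fun _ => rfl) (hb v) (by simpa [tauH] using hτd v)

lemma ncard_neighborSet_gad_diff_lt {U₀ : Set (HVert V ℓ d)} {D : GadIdx V ℓ d} {g : GadVert}
    (hw : HVert.gad D g ∈ anchor ⁻¹' U₀) :
    ((graphH G ℓ d).neighborSet (.gad D g) \ anchor ⁻¹' U₀).ncard < θH (.gad D g) := by
  rw [Set.mem_preimage, anchor_gad] at hw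
  have hsub : (graphH G ℓ d).neighborSet (.gad D g) \ anchor ⁻¹' U₀ ⊆
      {u | g = .h ∧ u = gadHead D} := by
    rintro u ⟨hadj, hu⟩
    rcases graphH_adj_gad hadj with ⟨-, rfl⟩ | hhead | ⟨g', rfl⟩
    · exact absurd hw hu
    · exact hhead
    · exact absurd (by rwa [Set.mem_preimage, anchor_gad]) hu
  refine (Set.ncard_le_ncard hsub).trans_lt ?_
  cases g <;> simp [tauH]

def blockingSet (T : Set V) (i₀ i₁ : Fin ℓ) : Set (HVert V ℓ d) :=
  anchor ⁻¹' (HVert.orig '' Tᶜ ∪ {HVert.xx i₀, HVert.yy i₁})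

lemma ncard_neighborSet_diff_blockingSet_lt {T : Set V} (hT : T ≠ Set.univ)
    (hclosed : ∀ v ∉ T, (G.neighborSet v ∩ T).ncard < τ v) {i₀ i₁ : Fin ℓ}
    {w : HVert V ℓ d} (hw : w ∈ blockingSet T i₀ i₁) :
    ((graphH G ℓ d).neighborSet w \ blockingSet T i₀ i₁).ncard < θH w := by
  have hTcard : T.ncard < Fintype.card V := Nat.card_eq_fintype_card (α := V) ▸ Set.ncard_lt_card hT
  have hcompl (i : Fin ℓ) : ({i}ᶜ : Set (Fin ℓ)).ncard < ℓ := by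
    have := Set.ncard_add_ncard_compl {i}
    simp only [Set.ncard_singleton, Nat.card_eq_fintype_card, Fintype.card_fin] at this
    omega
  rcases w with v | i | i | ⟨v, j⟩ | ⟨v, j⟩ | ⟨D, g⟩
  all_goals simp only [blockingSet, Set.mem_preimage, anchor, Set.mem_union, Set.mem_image,
    Set.mem_compl_iff, Set.mem_insert_iff, Set.mem_singleton_iff, HVert.orig.injEq,
    HVert.xx.injEq, HVert.yy.injEq, reduceCtorEq, exists_eq_right, and_false, exists_false,
    or_false, false_or] at hw
  · refine ncard_lt_of_subset_image (f := HVert.orig) (fun u ⟨hadj, hu⟩ => ?_) (hclosed v hw)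
    rcases graphH_adj_orig hadj with ⟨w, hvw, rfl⟩ | ⟨_, rfl⟩ | ⟨_, rfl⟩ | ⟨_, rfl⟩ | ⟨_, rfl⟩
    · exact ⟨w, ⟨hvw, by simpa [blockingSet, anchor] using hu⟩, rfl⟩
    all_goals exact absurd (by simp [blockingSet, anchor, hw]) hu
  · subst hw
    refine ncard_lt_of_subset_image (f := fun v => .gad (.vx v i) .h) (fun u ⟨hadj, hu⟩ => ?_)
      hTcard
    rcases graphH_adj_xx hadj with ⟨v, rfl⟩ | ⟨_, _, rfl⟩
    · exact ⟨v, by simpa [blockingSet, anchor] using hu, rfl⟩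
    · exact absurd (by simp [blockingSet, anchor]) hu
  · subst hw
    refine ncard_lt_of_subset_image (f := fun v => .gad (.vy v i) .h) (fun u ⟨hadj, hu⟩ => ?_)
      hTcard
    rcases graphH_adj_yy hadj with ⟨v, rfl⟩ | ⟨_, _, rfl⟩
    · exact ⟨v, by simpa [blockingSet, anchor] using hu, rfl⟩
    · exact absurd (by simp [blockingSet, anchor]) hu
  · refine ncard_lt_of_subset_image (f := fun i => .gad (.xa i v j) .h) (fun u ⟨hadj, hu⟩ => ?_)
      (hcompl i₀)
    rcases graphH_adj_aa hadj with ⟨i, rfl⟩ | rfl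
    · exact ⟨i, by simpa [blockingSet, anchor] using hu, rfl⟩
    · exact absurd (by simp [blockingSet, anchor, hw]) hu
  · refine ncard_lt_of_subset_image (f := fun i => .gad (.yb i v j) .h) (fun u ⟨hadj, hu⟩ => ?_)
      (hcompl i₁)
    rcases graphH_adj_bb hadj with ⟨i, rfl⟩ | rfl
    · exact ⟨i, by simpa [blockingSet, anchor] using hu, rfl⟩
    · exact absurd (by simp [blockingSet, anchor, hw]) hu
  · exact ncard_neighborSet_gad_diff_lt hw

lemma XSet_subset_or_YSet_subset_or_isTargetSet (htar : IsTargetSet H θH S) :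
    XSet V ℓ d ⊆ anchor '' S ∨ YSet V ℓ d ⊆ anchor '' S ∨
      IsTargetSet G τ {v | HVert.orig v ∈ anchor '' S} := by
  refine or_iff_not_imp_left.2 fun hX => or_iff_not_imp_left.2 fun hY => ?_
  by_contra hG
  obtain ⟨_, ⟨i₀, rfl⟩, hi₀⟩ := Set.not_subset.1 hX
  obtain ⟨_, ⟨i₁, rfl⟩, hi₁⟩ := Set.not_subset.1 hY
  set T := activeSet G τ {v | HVert.orig v ∈ anchor '' S}
  obtain ⟨v₀, hv₀⟩ := (Set.ne_univ_iff_exists_notMem T).1 hG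
  have hSU : Disjoint S (blockingSet T i₀ i₁) := by
    refine Set.disjoint_left.2 fun w hwS hwU => ?_
    rcases hwU with ⟨v, hv, hvw⟩ | hwx | hwy
    · exact hv (subset_activeSet_s7 ⟨w, hwS, hvw.symm⟩)
    · exact hi₀ ⟨w, hwS, hwx⟩
    · exact hi₁ ⟨w, hwS, hwy⟩
  have hclosed (v : V) (hv : v ∉ T) : (G.neighborSet v ∩ T).ncard < τ v :=
    not_le.1 fun h => hv (mem_activeSet_of_le_ncard h)
  have hblock := disjoint_activeSet_of_ncard_lt hSU
    fun w hw => ncard_neighborSet_diff_blockingSet_lt hG hclosed hw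
  rw [htar] at hblock
  exact Set.disjoint_left.1 hblock (Set.mem_univ (HVert.orig v₀)) (.inl ⟨v₀, hv₀, rfl⟩)

lemma XSet_subset_anchor_image_of_subset {ks : ℕ} (hks : ks < ℓ) (hopt : ks < optTS G τ)
    {S' : Set (HVert V ℓ d)} (hS : S.ncard ≤ ks + ℓ) (hX : XSet V ℓ d ⊆ anchor '' S)
    (hS' : S' ⊆ S) (htar : IsTargetSet H θH S') : XSet V ℓ d ⊆ anchor '' S' := by
  have hsub : anchor '' S' ⊆ anchor '' S := Set.image_mono hS'
  rcases XSet_subset_or_YSet_subset_or_isTargetSet htar with hX' | hYG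
  · exact hX'
  obtain ⟨Z, hZ, hdisj, hZcard⟩ : ∃ Z ⊆ anchor '' S, Disjoint (XSet V ℓ d) Z ∧ ks < Z.ncard := by
    rcases hYG with hY | hG
    · exact ⟨_, hY.trans hsub, disjoint_XSet_YSet, ncard_YSet.symm ▸ hks⟩
    · refine ⟨HVert.orig '' {v | HVert.orig v ∈ anchor '' S'},
        Set.image_subset_iff.2 fun v hv => hsub hv, disjoint_XSet_image_orig _, ?_⟩
      rw [Set.ncard_image_of_injective _ fun _ _ h => HVert.orig.inj h]
      exact hopt.trans_le (Nat.sInf_le ⟨_, hG, rfl⟩)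
  have := add_ncard_le_of_XSet_subset hX hZ hdisj
  have : (anchor '' S).ncard ≤ S.ncard := Set.ncard_image_le
  omega

lemma lt_seqSize {ks : ℕ} (hks : ks < ℓ) (hopt : ks < optTS G τ) {T : ℕ}
    {Sfam : ℕ → Set (HVert V ℓ d)} (hseq : IsReconfSeq H θH (XSet V ℓ d) (YSet V ℓ d) T Sfam) :
    ks + ℓ < seqSize T Sfam := by
  by_contra! hsize
  have hX (t : ℕ) (ht : t ≤ T) : XSet V ℓ d ⊆ anchor '' Sfam t := by
    induction t with
    | zero =>
      rw [hseq.head]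
      rintro _ ⟨i, rfl⟩
      exact ⟨.xx i, ⟨i, rfl⟩, rfl⟩
    | succ t ih =>
      have hXt := ih (Nat.le_of_succ_le ht)
      rcases subset_or_subset_of_ncard_symmDiff_eq_one (hseq.step t ht) with hsub | hsub
      · exact hXt.trans (Set.image_mono hsub)
      refine XSet_subset_anchor_image_of_subset hks hopt ?_ hXt hsub (hseq.target (t + 1) ht)
      exact (Finset.le_sup (f := fun t => (Sfam t).ncard) (Finset.mem_range.2 (by omega))).trans
        hsize
  obtain ⟨_, ⟨i, rfl⟩, h⟩ : HVert.xx ⟨0, by omega⟩ ∈ anchor '' YSet V ℓ d :=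
    hseq.last ▸ hX T le_rfl ⟨_, rfl⟩
  cases h

end Thresholds

end TSS

open TSS in
theorem stmt7_general {V : Type*} [Fintype V] (G : SimpleGraph V) [DecidableRel G.Adj] (τ : V → ℕ)
    (ℓ : ℕ) (hτ : ∀ v : V, τ v ≤ G.degree v)
    (ks : ℕ) (hks : ks + 1 ≤ ℓ) (hopt : ks < optTS G τ) :
    ks + ℓ < optReconf (graphH G ℓ (fun v => G.degree v)) (tauH τ (Fintype.card V) ℓ (fun v => G.degree v))
      (XSet V ℓ (fun v => G.degree v)) (YSet V ℓ (fun v => G.degree v)) := by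
  -- `optReconf` is an `sInf` over `ℕ`, which is `0` on the empty set: exhibit a sequence first.
  obtain ⟨T, Sfam, hseq⟩ := exists_isReconfSeq_of_forall_superset
    (fun _ => isTargetSet_of_XSet_subset hτ) (fun _ => isTargetSet_of_YSet_subset hτ)
  refine Nat.lt_of_succ_le (le_csInf ⟨_, T, Sfam, hseq, rfl⟩ ?_)
  rintro _ ⟨T', Sfam', hseq', rfl⟩
  exact lt_seqSize hks hopt hseq'

open TSS in
/-- Soundness: if `ℓ ≥ k_s + 1` and `opt(G) > k_s`, then `opt_H(X ⇝ Y) > k_s + ℓ`. -/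
theorem stmt7 {V : Type*} [Fintype V] (G : SimpleGraph V) [DecidableRel G.Adj] (τ : V → ℕ)
    (ℓ : ℕ) (hℓ : 1 ≤ ℓ) (hiso : ∀ v : V, 0 < G.degree v) (hτ : ∀ v : V, τ v ≤ G.degree v)
    (ks : ℕ) (hks : ks + 1 ≤ ℓ) (hopt : ks < optTS G τ) :
    ks + ℓ < optReconf (graphH G ℓ (fun v => G.degree v)) (tauH τ (Fintype.card V) ℓ (fun v => G.degree v))
      (XSet V ℓ (fun v => G.degree v)) (YSet V ℓ (fun v => G.degree v)) :=
  stmt7_general G τ ℓ hτ ks hks hopt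
end
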